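/- Let T be a tree on a finite nonempty vertex type V with n = |V| vertices. Then the Wiener index of T satisfies (n−1)^2 ≤ W(T). -/

import Mathlib

/-!
Distinct vertices of a connected graph are at distance 1 if adjacent and at least 2 otherwise.
Summing over ordered pairs gives `W(G) ≥ n(n - 1) - |E(G)|`, and a tree has `n - 1` edges.
-/

/-- The Wiener index of a finite simple graph: half the sum of the graph
distances over all ordered pairs of vertices. -/
noncomputable def wienerIndex {V : Type*} [Fintype V] (G : SimpleGraph V) : ℚ :=
  (∑ u : V, ∑ v : V, (G.dist u v : ℚ)) / 2

open Finset

namespace SimpleGraph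

variable {V : Type*} {G : SimpleGraph V} [DecidableRel G.Adj]

lemma Connected.two_le_dist_add_ite_adj (hG : G.Connected) {u v : V} (huv : u ≠ v) :
    2 ≤ G.dist u v + if G.Adj u v then 1 else 0 := by
  by_cases hadj : G.Adj u v
  · simp [hadj, dist_eq_one_iff_adj.mpr hadj]
  · simpa [hadj, Nat.succ_le_iff] using hG.one_lt_dist_of_ne_of_not_adj huv hadj

variable [Fintype V]

lemma degree_eq_sum_erase_ite_adj [DecidableEq V] (u : V) :
    G.degree u = ∑ v ∈ univ.erase u, if G.Adj u v then 1 else 0 := by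
  rw [sum_erase _ (by simp), sum_boole, ← card_neighborFinset_eq_degree,
    neighborFinset_eq_filter, Nat.cast_id]

-- The `+ 2` stands in for the truncated `2 * (card V - 1)` on the left.
lemma Connected.two_mul_card_le_sum_dist_add_degree (hG : G.Connected) (u : V) :
    2 * Fintype.card V ≤ ∑ v, G.dist u v + G.degree u + 2 := by
  classical
  have hbound : #(univ.erase u) • 2 ≤
      ∑ v ∈ univ.erase u, (G.dist u v + if G.Adj u v then 1 else 0) :=
    card_nsmul_le_sum _ _ _ fun v hv ↦ hG.two_le_dist_add_ite_adj (ne_of_mem_erase hv).symm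
  rw [sum_add_distrib, sum_erase _ dist_self, ← degree_eq_sum_erase_ite_adj,
    card_erase_of_mem (mem_univ u), card_univ, smul_eq_mul] at hbound
  have hcard : 0 < Fintype.card V := Fintype.card_pos_iff.mpr hG.nonempty
  omega

lemma Connected.card_sq_sub_card_sub_card_edgeFinset_le_wienerIndex (hG : G.Connected) :
    (Fintype.card V : ℚ) ^ 2 - Fintype.card V - #G.edgeFinset ≤ wienerIndex G := by
  have hsum := sum_le_sum fun u (_ : u ∈ univ) ↦ hG.two_mul_card_le_sum_dist_add_degree u
  rw [sum_add_distrib, sum_add_distrib, sum_degrees_eq_twice_card_edges] at hsum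
  simp only [sum_const, card_univ, smul_eq_mul] at hsum
  have hsumℚ : (Fintype.card V * (2 * Fintype.card V) : ℚ) ≤
      ∑ u, ∑ v, (G.dist u v : ℚ) + 2 * #G.edgeFinset + Fintype.card V * 2 := by
    exact_mod_cast hsum
  rw [wienerIndex]
  linarith

end SimpleGraph

theorem wiener_lower_bound {V : Type*} [Fintype V]
    (T : SimpleGraph V) (hT : T.IsTree) :
    ((Fintype.card V : ℚ) - 1) ^ 2 ≤ wienerIndex T := by
  classical
  have hedges : (#T.edgeFinset : ℚ) + 1 = Fintype.card V := by exact_mod_cast hT.card_edgeFinset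
  have hbound := hT.connected.card_sq_sub_card_sub_card_edgeFinset_le_wienerIndex
  linarith
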